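/- Tweedie's formula (Gaussian case): let Z be an ℝ^d-valued random variable with density q, let ε ~ N(0, σ²I_d) be independent of Z, and let X = Z + ε have marginal density p_σ(x) = ∫ q(z)·φ_σ(x - z) dz where φ_σ is the N(0, σ²I) density. Then the posterior mean satisfies E[Z | X = x] = x + σ²·∇_x log p_σ(x), for all x with p_σ(x) > 0. -/

import Mathlib

set_option maxHeartbeats 1000000
set_option synthInstance.maxHeartbeats 1000000


open MeasureTheory InnerProductSpace Metric

section Aux

variable {d : ℕ}

/-- Derivative of the Gaussian kernel. -/
lemma gauss_hasFDerivAt (σ : ℝ) (hσ : 0 < σ)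
    (φ : EuclideanSpace ℝ (Fin d) → ℝ)
    (hφ : ∀ u, φ u = (2 * Real.pi * σ ^ 2) ^ (-(d : ℝ) / 2) *
      Real.exp (-‖u‖ ^ 2 / (2 * σ ^ 2)))
    (u : EuclideanSpace ℝ (Fin d)) :
    HasFDerivAt φ ((-(σ ^ 2)⁻¹ * φ u) • innerSL ℝ u) u := by
  set c : ℝ := (2 * Real.pi * σ ^ 2) ^ (-(d : ℝ) / 2) with hc
  have h1 : HasFDerivAt (fun v : EuclideanSpace ℝ (Fin d) => ‖v‖ ^ 2)
      (2 • innerSL ℝ u) u := (hasStrictFDerivAt_norm_sq u).hasFDerivAt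
  have h2 : HasFDerivAt (fun v : EuclideanSpace ℝ (Fin d) => -‖v‖ ^ 2 / (2 * σ ^ 2))
      ((-(2 * σ ^ 2)⁻¹) • (2 • innerSL ℝ u)) u := by
    have heq : (fun v : EuclideanSpace ℝ (Fin d) => -‖v‖ ^ 2 / (2 * σ ^ 2))
        = fun v => (-(2 * σ ^ 2)⁻¹) * ‖v‖ ^ 2 := by
      funext v; ring
    rw [heq]
    exact h1.const_mul _
  have h3 := (h2.exp).const_mul c
  have hfun : φ = fun v => c * Real.exp (-‖v‖ ^ 2 / (2 * σ ^ 2)) := funext hφ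
  rw [hfun]
  refine h3.congr_fderiv ?_
  ext v
  simp only [ContinuousLinearMap.coe_smul', Pi.smul_apply, smul_eq_mul,
    ContinuousLinearMap.smul_apply, hφ, hc]
  push_cast
  ring

/-- The key global bound `φ u * ‖u‖ ≤ c * σ`. -/
lemma gauss_mul_norm_le (σ : ℝ) (hσ : 0 < σ)
    (φ : EuclideanSpace ℝ (Fin d) → ℝ)
    (hφ : ∀ u, φ u = (2 * Real.pi * σ ^ 2) ^ (-(d : ℝ) / 2) *
      Real.exp (-‖u‖ ^ 2 / (2 * σ ^ 2)))
    (u : EuclideanSpace ℝ (Fin d)) :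
    φ u * ‖u‖ ≤ (2 * Real.pi * σ ^ 2) ^ (-(d : ℝ) / 2) * σ := by
  set c : ℝ := (2 * Real.pi * σ ^ 2) ^ (-(d : ℝ) / 2) with hc
  have hcpos : 0 < c := Real.rpow_pos_of_pos (by positivity) _
  set t : ℝ := ‖u‖ with ht
  have ht0 : 0 ≤ t := norm_nonneg _
  set a : ℝ := t ^ 2 / (2 * σ ^ 2) with ha
  have ha0 : 0 ≤ a := by positivity
  have hea : a + 1 ≤ Real.exp a := Real.add_one_le_exp a
  have hexp : Real.exp (-a) ≤ (a + 1)⁻¹ := by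
    rw [Real.exp_neg]
    exact inv_anti₀ (by linarith) hea
  have key : Real.exp (-a) * t ≤ σ := by
    have h1 : Real.exp (-a) * t ≤ (a + 1)⁻¹ * t :=
      mul_le_mul_of_nonneg_right hexp ht0
    have h2 : (a + 1)⁻¹ * t ≤ σ := by
      rw [inv_mul_le_iff₀ (by linarith)]
      have hkey : (a + 1) * σ = t ^ 2 / (2 * σ) + σ := by
        rw [ha]; field_simp
      rw [hkey]
      have h3 : (t ^ 2 + 2 * σ ^ 2 - 2 * σ * t) / (2 * σ) =
          t ^ 2 / (2 * σ) + σ - t := by field_simp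
      have h4 : 0 ≤ (t ^ 2 + 2 * σ ^ 2 - 2 * σ * t) / (2 * σ) :=
        div_nonneg (by nlinarith [sq_nonneg (t - σ)]) (by positivity)
      linarith [h3 ▸ h4]
    linarith
  have : φ u * t = c * (Real.exp (-a) * t) := by
    rw [hφ u, ha, ht]; ring_nf
  rw [this]
  exact mul_le_mul_of_nonneg_left key hcpos.le

end Aux

/-- Tweedie's formula (Gaussian case): if `X = Z + ε` with `ε ~ N(0, σ²I)` independent of
`Z ~ q`, and `p_σ` is the marginal density of `X`, then the posterior mean satisfies
`E[Z | X = x] = x + σ² ∇ₓ log p_σ(x)` wherever `p_σ(x) > 0`. -/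
theorem stmt6 {d : ℕ} (σ : ℝ) (hσ : 0 < σ)
    (q : EuclideanSpace ℝ (Fin d) → ℝ)
    (hq0 : ∀ z, 0 ≤ q z) (hqint : Integrable q) (hqprob : ∫ z, q z = 1)
    (φ : EuclideanSpace ℝ (Fin d) → ℝ)
    (hφ : ∀ u, φ u = (2 * Real.pi * σ ^ 2) ^ (-(d : ℝ) / 2) *
      Real.exp (-‖u‖ ^ 2 / (2 * σ ^ 2)))
    (p : EuclideanSpace ℝ (Fin d) → ℝ)
    (hp : ∀ x, p x = ∫ z, q z * φ (x - z))
    (x : EuclideanSpace ℝ (Fin d)) (hx : 0 < p x) :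
    (p x)⁻¹ • (∫ z, (q z * φ (x - z)) • z) =
      x + σ ^ 2 • gradient (fun y => Real.log (p y)) x := by
  set c : ℝ := (2 * Real.pi * σ ^ 2) ^ (-(d : ℝ) / 2) with hcdef
  have hcpos : 0 < c := Real.rpow_pos_of_pos (by positivity) _
  have hσ2 : (0:ℝ) < σ ^ 2 := by positivity
  -- basic facts about φ
  have hφpos : ∀ u, 0 < φ u := fun u => by
    rw [hφ u]; positivity
  have hφle : ∀ u, φ u ≤ c := fun u => by
    rw [hφ u]
    have h1 : Real.exp (-‖u‖ ^ 2 / (2 * σ ^ 2)) ≤ 1 :=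
      Real.exp_le_one_iff.2 (by rw [neg_div]; exact neg_nonpos.2 (by positivity))
    nlinarith [hcpos, Real.exp_pos (-‖u‖ ^ 2 / (2 * σ ^ 2))]
  have hφb : ∀ u, φ u * ‖u‖ ≤ c * σ := gauss_mul_norm_le σ hσ φ hφ
  have hφcont : Continuous φ := by
    rw [funext hφ]
    fun_prop
  have hqm : AEStronglyMeasurable q volume := hqint.1
  have hcontφ : ∀ y : EuclideanSpace ℝ (Fin d),
      Continuous (fun z : EuclideanSpace ℝ (Fin d) => φ (y - z)) := fun y =>
    hφcont.comp (continuous_sub_left y)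
  -- integrability of z ↦ q z * φ (y - z)
  have hint : ∀ y : EuclideanSpace ℝ (Fin d), Integrable (fun z => q z * φ (y - z)) := by
    intro y
    have := hqint.bdd_mul (c := c) ((hcontφ y).aestronglyMeasurable)
      (Filter.Eventually.of_forall fun z => by
        simp only [Real.norm_eq_abs, abs_of_pos (hφpos _)]
        exact hφle _)
    simpa [mul_comm] using this
  -- the candidate derivative pieces
  set m : EuclideanSpace ℝ (Fin d) → EuclideanSpace ℝ (Fin d) := fun z => (q z * (-(σ ^ 2)⁻¹ * φ (x - z))) • (x - z) with hm
  set F' : EuclideanSpace ℝ (Fin d) → EuclideanSpace ℝ (Fin d) → (EuclideanSpace ℝ (Fin d) →L[ℝ] ℝ) := fun y z =>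
    (q z * (-(σ ^ 2)⁻¹ * φ (y - z))) • innerSL ℝ (y - z) with hF'
  -- uniform bound
  have hbound : ∀ (y z : EuclideanSpace ℝ (Fin d)), ‖F' y z‖ ≤ q z * (c / σ) := by
    intro y z
    simp only [hF']
    have h1 : |q z * (-(σ ^ 2)⁻¹ * φ (y - z))| = q z * (σ ^ 2)⁻¹ * φ (y - z) := by
      rw [show q z * (-(σ ^ 2)⁻¹ * φ (y - z)) = -(q z * (σ ^ 2)⁻¹ * φ (y - z)) by ring,
        abs_neg, abs_of_nonneg (mul_nonneg (mul_nonneg (hq0 z) (by positivity)) (hφpos _).le)]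
    rw [norm_smul (q z * (-(σ ^ 2)⁻¹ * φ (y - z))) (innerSL ℝ (y - z)),
      Real.norm_eq_abs, innerSL_apply_norm, h1]
    have h2 : q z * (σ ^ 2)⁻¹ * φ (y - z) * ‖y - z‖
        = q z * (σ ^ 2)⁻¹ * (φ (y - z) * ‖y - z‖) := by ring
    rw [h2]
    have h3 : q z * (σ ^ 2)⁻¹ * (φ (y - z) * ‖y - z‖) ≤ q z * (σ ^ 2)⁻¹ * (c * σ) :=
      mul_le_mul_of_nonneg_left (hφb _) (mul_nonneg (hq0 z) (by positivity))
    have h4 : q z * (σ ^ 2)⁻¹ * (c * σ) = q z * (c / σ) := by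
      field_simp
    linarith [h4 ▸ h3]
  -- derivative of y ↦ q z * φ (y - z)
  have hdiff : ∀ (z y : EuclideanSpace ℝ (Fin d)), HasFDerivAt (fun y' => q z * φ (y' - z)) (F' y z) y := by
    intro z y
    have h1 : HasFDerivAt (fun y' : EuclideanSpace ℝ (Fin d) => y' - z) (ContinuousLinearMap.id ℝ (EuclideanSpace ℝ (Fin d))) y :=
      (hasFDerivAt_id y).sub_const z
    have h2 := (gauss_hasFDerivAt σ hσ φ hφ (y - z)).comp y h1
    have h3 := h2.const_mul (q z)
    refine h3.congr_fderiv ?_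
    rw [hF']
    ext v
    simp [mul_assoc, mul_comm, mul_left_comm]
  -- measurability of F' x
  have hF'meas : AEStronglyMeasurable (F' x) volume := by
    apply AEStronglyMeasurable.fun_smul
    · exact hqm.mul (((hcontφ x).aestronglyMeasurable).const_mul _)
    · exact ((innerSL ℝ).continuous.comp (continuous_sub_left x)).aestronglyMeasurable
  -- integrability of F' x and m
  have hboundint : Integrable (fun z => q z * (c / σ)) := hqint.mul_const _
  have hF'int : Integrable (F' x) := by
    refine hboundint.mono' hF'meas (Filter.Eventually.of_forall fun z => ?_)
    exact hbound x z
  have hmmeas : AEStronglyMeasurable m volume := by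
    apply AEStronglyMeasurable.fun_smul
    · exact hqm.mul (((hcontφ x).aestronglyMeasurable).const_mul _)
    · exact (continuous_sub_left x).aestronglyMeasurable
  have hmint : Integrable m := by
    refine hboundint.mono' hmmeas (Filter.Eventually.of_forall fun z => ?_)
    simp only [hm]
    have h1 : |q z * (-(σ ^ 2)⁻¹ * φ (x - z))| = q z * (σ ^ 2)⁻¹ * φ (x - z) := by
      rw [show q z * (-(σ ^ 2)⁻¹ * φ (x - z)) = -(q z * (σ ^ 2)⁻¹ * φ (x - z)) by ring,
        abs_neg, abs_of_nonneg (mul_nonneg (mul_nonneg (hq0 z) (by positivity)) (hφpos _).le)]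
    rw [norm_smul (q z * (-(σ ^ 2)⁻¹ * φ (x - z))) (x - z), Real.norm_eq_abs, h1]
    have h3 : q z * (σ ^ 2)⁻¹ * φ (x - z) * ‖x - z‖
        ≤ q z * (σ ^ 2)⁻¹ * (c * σ) := by
      rw [mul_assoc (q z * (σ ^ 2)⁻¹)]
      exact mul_le_mul_of_nonneg_left (hφb _) (mul_nonneg (hq0 z) (by positivity))
    have h4 : q z * (σ ^ 2)⁻¹ * (c * σ) = q z * (c / σ) := by
      field_simp
    linarith [h4 ▸ h3]
  -- integrability of the posterior-mean integrand
  have hIint : Integrable (fun z => (q z * φ (x - z)) • z) := by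
    have hImeas : AEStronglyMeasurable (fun z => (q z * φ (x - z)) • z) volume := by
      apply AEStronglyMeasurable.fun_smul
      · exact hqm.mul ((hcontφ x).aestronglyMeasurable)
      · exact aestronglyMeasurable_id
    refine (hqint.mul_const (c * σ + c * ‖x‖)).mono' hImeas
      (Filter.Eventually.of_forall fun z => ?_)
    have h1 : ‖(q z * φ (x - z)) • z‖ = q z * φ (x - z) * ‖z‖ := by
      rw [norm_smul, Real.norm_eq_abs,
        abs_of_nonneg (mul_nonneg (hq0 z) (hφpos _).le)]
    have h2 : ‖z‖ ≤ ‖x - z‖ + ‖x‖ := by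
      calc ‖z‖ = ‖x - (x - z)‖ := by rw [sub_sub_cancel]
      _ ≤ ‖x‖ + ‖x - z‖ := norm_sub_le _ _
      _ = ‖x - z‖ + ‖x‖ := by ring
    rw [h1]
    have h3 := hφb (x - z)
    have h4 := hφle (x - z)
    have h5 := hq0 z
    have h6 := (hφpos (x - z)).le
    calc q z * φ (x - z) * ‖z‖
        ≤ q z * φ (x - z) * (‖x - z‖ + ‖x‖) :=
          mul_le_mul_of_nonneg_left h2 (mul_nonneg h5 h6)
      _ = q z * (φ (x - z) * ‖x - z‖) + q z * (φ (x - z) * ‖x‖) := by ring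
      _ ≤ q z * (c * σ) + q z * (c * ‖x‖) :=
          add_le_add (mul_le_mul_of_nonneg_left h3 h5)
            (mul_le_mul_of_nonneg_left
              (mul_le_mul_of_nonneg_right h4 (norm_nonneg x)) h5)
      _ = q z * (c * σ + c * ‖x‖) := by ring
  -- differentiation under the integral sign
  have hFmeas : ∀ᶠ y in nhds x, AEStronglyMeasurable (fun z => q z * φ (y - z)) volume :=
    Filter.Eventually.of_forall fun y => (hint y).1
  have hpderiv : HasFDerivAt (fun y => ∫ z, q z * φ (y - z)) (∫ z, F' x z) x := by
    exact hasFDerivAt_integral_of_dominated_of_fderiv_le (ball_mem_nhds x one_pos)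
      hFmeas (hint x) hF'meas
      (Filter.Eventually.of_forall fun z y _ => hbound y z)
      hboundint
      (Filter.Eventually.of_forall fun z y _ => hdiff z y)
  have hpderiv' : HasFDerivAt p (∫ z, F' x z) x := by
    have : p = fun y => ∫ z, q z * φ (y - z) := funext hp
    rw [this]; exact hpderiv
  -- identify ∫ F' x z with toDual of ∫ m
  have hFG : (∫ z, F' x z) = toDual ℝ (EuclideanSpace ℝ (Fin d)) (∫ z, m z) := by
    apply ContinuousLinearMap.ext
    intro v
    rw [ContinuousLinearMap.integral_apply hF'int v, toDual_apply_apply, real_inner_comm,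
      ← integral_inner (𝕜 := ℝ) hmint v]
    congr 1
    funext z
    simp only [hF', hm, ContinuousLinearMap.smul_apply, innerSL_apply_apply, smul_eq_mul,
      real_inner_smul_right]
    rw [real_inner_comm]
  set G : EuclideanSpace ℝ (Fin d) := ∫ z, m z with hG
  have hgrad : HasGradientAt p G x := by
    rw [hasGradientAt_iff_hasFDerivAt, ← hFG]; exact hpderiv'
  -- gradient of log ∘ p
  have hloggrad : HasGradientAt (fun y => Real.log (p y)) ((p x)⁻¹ • G) x := by
    have hsm : toDual ℝ (EuclideanSpace ℝ (Fin d)) ((p x)⁻¹ • G)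
        = (p x)⁻¹ • toDual ℝ (EuclideanSpace ℝ (Fin d)) G := by
      apply ContinuousLinearMap.ext
      intro w
      simp only [toDual_apply_apply, ContinuousLinearMap.smul_apply, smul_eq_mul]
      rw [real_inner_smul_left]
    rw [hasGradientAt_iff_hasFDerivAt, hsm]
    exact (Real.hasDerivAt_log hx.ne').comp_hasFDerivAt x hgrad.hasFDerivAt
  rw [hloggrad.gradient]
  -- final algebra
  have hGval : G = (-(σ ^ 2)⁻¹) • ((p x) • x - ∫ z, (q z * φ (x - z)) • z) := by
    rw [hG]
    have h1 : m = fun z =>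
        (-(σ ^ 2)⁻¹) • ((q z * φ (x - z)) • x - (q z * φ (x - z)) • z) := by
      funext z
      show (q z * (-(σ ^ 2)⁻¹ * φ (x - z))) • (x - z) = _
      rw [← smul_sub (q z * φ (x - z)) x z, smul_smul]
      congr 1
      ring
    rw [h1, integral_smul, integral_sub ((hint x).smul_const x) hIint,
      integral_smul_const, ← hp]
  rw [hGval, smul_smul, smul_smul]
  have hs : σ ^ 2 * (p x)⁻¹ * -(σ ^ 2)⁻¹ = -(p x)⁻¹ := by
    field_simp
  rw [hs, neg_smul, smul_sub, smul_smul, inv_mul_cancel₀ hx.ne', one_smul]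
  abel
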